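/- arXiv:1908.02993 — 2 statements merged into one kernel-verified Lean document; each statement's English description precedes it below -/
import Mathlib

section
/- Let δ > 0 and Q = [0,1]×[0,δ]. Let C^m : ℝ² → ℝ^{2×2×2×2} be a measurable, integrable-on-Q, Q-periodic tensor field that is uniformly elliptic: there is c > 0 with C^m_{ijkl}(ξ) E_{ij} E_{kl} ≥ c |E|² for all 2×2 matrices E and all ξ. Let N_{kpq} : ℝ² → ℝ be continuously differentiable Q-periodic perturbation functions, and define the homogenized tensor C_{pq₁iq₂} = ⟨ C^m_{rjkl} (N_{riq₂,j} + δ_{ir} δ_{jq₂}) (N_{kpq₁,l} + δ_{pk} δ_{lq₁}) ⟩. Then the homogenized tensor inherits the ellipticity constant: for every constant 2×2 matrix H, C_{pq₁iq₂} H_{pq₁} H_{iq₂} ≥ c |H|². (The proof uses that the cell average of each ∂N_{kpq}/∂ξ_l vanishes by periodicity, together with the Cauchy–Schwarz/Jensen inequality ⟨|A|²⟩ ≥ |⟨A⟩|².) -/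
open MeasureTheory

noncomputable section

/-- `g` is periodic with respect to the cell `Q = [0,1] × [0,δ]`. -/
def QPer {α : Type*} (δ : ℝ) (g : (Fin 2 → ℝ) → α) : Prop :=
  (∀ ξ, g (ξ + Pi.single 0 1) = g ξ) ∧ (∀ ξ, g (ξ + Pi.single 1 δ) = g ξ)

/-- The periodicity cell `Q = [0,1] × [0,δ] ⊂ ℝ²`. -/
def cell (δ : ℝ) : Set (Fin 2 → ℝ) := Set.Icc 0 ![1, δ]

/-- Double contraction `C_{ijkl} A_{ij} B_{kl}`. -/
def contr (C : Fin 2 → Fin 2 → Fin 2 → Fin 2 → ℝ) (A B : Fin 2 → Fin 2 → ℝ) : ℝ :=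
  ∑ i, ∑ j, ∑ k, ∑ l, C i j k l * A i j * B k l

/-- Kronecker delta on `Fin 2`. -/
def kron (a b : Fin 2) : ℝ := if a = b then 1 else 0

/-- Partial derivative `N_{kpq,l}(ξ) = ∂N_{kpq}/∂ξ_l (ξ)` of a perturbation function. -/
def pdN (N : Fin 2 → Fin 2 → Fin 2 → (Fin 2 → ℝ) → ℝ) (k p q : Fin 2)
    (ξ : Fin 2 → ℝ) (l : Fin 2) : ℝ :=
  fderiv ℝ (N k p q) ξ (Pi.single l 1)

/-!
The homogenized energy of a constant macroscopic strain `H` is the cell average of the microscopic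
energy `Cᵐ(ξ) : A(ξ) : A(ξ)` of the strain field `A = ∇N·H + H`. Pointwise ellipticity bounds this
below by `c ⟨|A|²⟩`, Jensen's inequality (the variance of each component of `A` under the uniform
probability on `Q` is nonnegative) by `c |⟨A⟩|²`, and `⟨A⟩ = H` because the derivative of a
periodic `C¹` function integrates to zero along every period of the cell.
-/

open MeasureTheory ProbabilityTheory Set

section Integral

variable {Ω : Type*} [MeasurableSpace Ω] {μ : Measure Ω}

theorem integral_sum_sum {ι κ : Type*} [Fintype ι] [Fintype κ] {f : ι → κ → Ω → ℝ}
    (hf : ∀ i j, Integrable (f i j) μ) :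
    ∫ x, ∑ i, ∑ j, f i j x ∂μ = ∑ i, ∑ j, ∫ x, f i j x ∂μ := by
  rw [integral_finsetSum _ fun i _ => integrable_finsetSum _ fun j _ => hf i j]
  exact Finset.sum_congr rfl fun i _ => integral_finsetSum _ fun j _ => hf i j

theorem integral_cond_eq_inv_mul_setIntegral (s : Set Ω) (f : Ω → ℝ) :
    ∫ x, f x ∂μ[|s] = (μ.real s)⁻¹ * ∫ x in s, f x ∂μ := by
  rw [ProbabilityTheory.cond, integral_smul_measure, ENNReal.toReal_inv, measureReal_def,
    smul_eq_mul]

theorem IntegrableOn.integrable_cond {s : Set Ω} {f : Ω → ℝ} (hf : IntegrableOn f s μ) :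
    Integrable f μ[|s] := by
  rcases eq_or_ne (μ s) 0 with hs | hs
  · rw [cond_eq_zero_of_meas_eq_zero hs]
    exact integrable_zero_measure
  · exact hf.smul_measure (ENNReal.inv_ne_top.2 hs)

section Compact

variable [TopologicalSpace Ω] [T2Space Ω] [OpensMeasurableSpace Ω] [IsLocallyFiniteMeasure μ]
  {K : Set Ω}

theorem Continuous.integrable_cond_of_isCompact {f : Ω → ℝ} (hf : Continuous f)
    (hK : IsCompact K) : Integrable f μ[|K] :=
  IntegrableOn.integrable_cond (hf.continuousOn.integrableOn_compact hK)

theorem Continuous.memLp_two_cond_of_isCompact {f : Ω → ℝ} (hf : Continuous f)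
    (hK : IsCompact K) : MemLp f 2 μ[|K] :=
  (memLp_two_iff_integrable_sq hf.aestronglyMeasurable).2
    ((hf.pow 2).integrable_cond_of_isCompact hK)

end Compact

end Integral

section Energy

variable {Ω : Type*} [MeasurableSpace Ω] {μ : Measure Ω}

theorem contr_sum_mul_sum_mul (C U : Fin 2 → Fin 2 → Fin 2 → Fin 2 → ℝ)
    (H : Fin 2 → Fin 2 → ℝ) :
    contr C (fun r j => ∑ i, ∑ q, H i q * U i q r j) (fun r j => ∑ i, ∑ q, H i q * U i q r j) =
      ∑ p, ∑ q₁, ∑ i, ∑ q₂, contr C (U i q₂) (U p q₁) * H p q₁ * H i q₂ := by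
  simp only [contr, Fin.sum_univ_two]
  ring

theorem sum_integral_contr_mul_eq_integral_contr
    {C : Ω → Fin 2 → Fin 2 → Fin 2 → Fin 2 → ℝ} {U : Fin 2 → Fin 2 → Ω → Fin 2 → Fin 2 → ℝ}
    (hU : ∀ i q p q', Integrable (fun x => contr (C x) (U i q x) (U p q' x)) μ)
    (H : Fin 2 → Fin 2 → ℝ) :
    ∑ p, ∑ q₁, ∑ i, ∑ q₂, (∫ x, contr (C x) (U i q₂ x) (U p q₁ x) ∂μ) * H p q₁ * H i q₂ =
      ∫ x, contr (C x) (fun r j => ∑ i, ∑ q, H i q * U i q x r j)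
        (fun r j => ∑ i, ∑ q, H i q * U i q x r j) ∂μ := by
  have hint : ∀ p q₁ i q₂,
      Integrable (fun x => contr (C x) (U i q₂ x) (U p q₁ x) * H p q₁ * H i q₂) μ :=
    fun p q₁ i q₂ => ((hU i q₂ p q₁).mul_const _).mul_const _
  simp only [contr_sum_mul_sum_mul, ← integral_mul_const]
  rw [integral_sum_sum fun p q₁ => integrable_finsetSum _ fun i _ =>
    integrable_finsetSum _ fun q₂ _ => hint p q₁ i q₂]
  simp only [integral_sum_sum (hint _ _)]

theorem integrableOn_contr [TopologicalSpace Ω] [T2Space Ω] [OpensMeasurableSpace Ω]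
    {K : Set Ω} (hK : IsCompact K) {C : Ω → Fin 2 → Fin 2 → Fin 2 → Fin 2 → ℝ}
    (hC : ∀ i j k l, IntegrableOn (fun x => C x i j k l) K μ) {A B : Ω → Fin 2 → Fin 2 → ℝ}
    (hA : ∀ i j, Continuous fun x => A x i j) (hB : ∀ k l, Continuous fun x => B x k l) :
    IntegrableOn (fun x => contr (C x) (A x) (B x)) K μ :=
  integrable_finsetSum _ fun i _ => integrable_finsetSum _ fun j _ =>
    integrable_finsetSum _ fun k _ => integrable_finsetSum _ fun l _ =>
      ((hC i j k l).mul_continuousOn (hA i j).continuousOn hK).mul_continuousOn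
        (hB k l).continuousOn hK

variable [IsProbabilityMeasure μ]

theorem sq_integral_le_integral_sq {f : Ω → ℝ} (hf : MemLp f 2 μ) :
    (∫ x, f x ∂μ) ^ 2 ≤ ∫ x, f x ^ 2 ∂μ := by
  have h := variance_nonneg f μ
  rw [variance_eq_sub hf, sub_nonneg] at h
  simpa using h

theorem mul_sum_sq_integral_le_integral_contr {c : ℝ} (hc : 0 ≤ c)
    {C : Ω → Fin 2 → Fin 2 → Fin 2 → Fin 2 → ℝ}
    (hC : ∀ x E, c * (∑ i, ∑ j, E i j * E i j) ≤ contr (C x) E E)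
    {A : Ω → Fin 2 → Fin 2 → ℝ} (hA : ∀ i j, MemLp (fun x => A x i j) 2 μ)
    (hCA : Integrable (fun x => contr (C x) (A x) (A x)) μ) :
    c * ∑ i, ∑ j, (∫ x, A x i j ∂μ) ^ 2 ≤ ∫ x, contr (C x) (A x) (A x) ∂μ := by
  have hA2 : ∀ i j, Integrable (fun x => A x i j * A x i j) μ := fun i j =>
    (hA i j).integrable_mul (hA i j)
  calc c * ∑ i, ∑ j, (∫ x, A x i j ∂μ) ^ 2
      ≤ c * ∑ i, ∑ j, ∫ x, A x i j * A x i j ∂μ := by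
        gcongr with i _ j _
        simpa only [sq] using sq_integral_le_integral_sq (hA i j)
    _ = ∫ x, c * ∑ i, ∑ j, A x i j * A x i j ∂μ := by
        rw [integral_const_mul, integral_sum_sum hA2]
    _ ≤ ∫ x, contr (C x) (A x) (A x) ∂μ :=
        integral_mono ((integrable_finsetSum _ fun i _ => integrable_finsetSum _
          fun j _ => hA2 i j).const_mul c) hCA fun x => hC x (A x)

end Energy

theorem integral_fderiv_line_eq_zero {E F : Type*} [NormedAddCommGroup E] [NormedSpace ℝ E]
    [NormedAddCommGroup F] [NormedSpace ℝ F] [CompleteSpace F] {g : E → F} (hg : ContDiff ℝ 1 g)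
    (w v : E) {T : ℝ} (hT : 0 ≤ T) (hper : g (w + T • v) = g w) :
    ∫ t in Icc 0 T, fderiv ℝ g (w + t • v) v = 0 := by
  have hderiv : ∀ t, HasDerivAt (fun t : ℝ => g (w + t • v)) (fderiv ℝ g (w + t • v) v) t := by
    intro t
    have hline : HasDerivAt (fun t : ℝ => w + t • v) v t := by
      simpa using ((hasDerivAt_id t).smul_const v).const_add w
    exact (hg.differentiable one_ne_zero _).hasFDerivAt.comp_hasDerivAt t hline
  have hcont : Continuous fun t : ℝ => fderiv ℝ g (w + t • v) v :=
    ((hg.continuous_fderiv one_ne_zero).comp (by fun_prop)).clm_apply continuous_const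
  rw [integral_Icc_eq_integral_Ioc, ← intervalIntegral.integral_of_le hT,
    intervalIntegral.integral_eq_sub_of_hasDerivAt (fun t _ => hderiv t)
      (hcont.intervalIntegrable 0 T)]
  simp [hper]

section Cell

theorem isCompact_cell (δ : ℝ) : IsCompact (cell δ) := isCompact_Icc

theorem measureReal_cell {δ : ℝ} (hδ : 0 ≤ δ) : volume.real (cell δ) = δ := by
  rw [measureReal_def, cell, Real.volume_Icc_pi_toReal]
  · simp [Fin.prod_univ_two]
  · simp [Pi.le_def, Fin.forall_fin_two, hδ]

theorem integral_cond_cell {δ : ℝ} (hδ : 0 ≤ δ) (f : (Fin 2 → ℝ) → ℝ) :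
    ∫ ξ, f ξ ∂volume[|cell δ] = 1 / δ * ∫ ξ in cell δ, f ξ := by
  rw [integral_cond_eq_inv_mul_setIntegral, measureReal_cell hδ, one_div]

theorem isProbabilityMeasure_cond_cell {δ : ℝ} (hδ : 0 < δ) :
    IsProbabilityMeasure (volume[|cell δ]) := by
  refine cond_isProbabilityMeasure_of_finite (fun h0 => ?_) (isCompact_cell δ).measure_lt_top.ne
  have h := measureReal_cell hδ.le
  rw [measureReal_def, h0, ENNReal.toReal_zero] at h
  exact hδ.ne h

theorem cell_eq_preimage_finTwoArrow (δ : ℝ) :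
    cell δ = MeasurableEquiv.finTwoArrow ⁻¹' (Icc 0 1 ×ˢ Icc 0 δ) := by
  ext ξ
  simp [cell, Pi.le_def, Fin.forall_fin_two, and_and_and_comm]

theorem setIntegral_cell_eq_setIntegral_prod {E : Type*} [NormedAddCommGroup E]
    [NormedSpace ℝ E] (δ : ℝ) (f : (Fin 2 → ℝ) → E) :
    ∫ ξ in cell δ, f ξ = ∫ p in Icc 0 1 ×ˢ Icc 0 δ, f ![p.1, p.2] := by
  rw [cell_eq_preimage_finTwoArrow, ← (volume_preserving_finTwoArrow ℝ).setIntegral_preimage_emb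
    MeasurableEquiv.finTwoArrow.measurableEmbedding]
  congr with ξ
  congr 1
  ext i
  fin_cases i <;> rfl

theorem integral_cell_fderiv_eq_zero {δ : ℝ} (hδ : 0 ≤ δ) {g : (Fin 2 → ℝ) → ℝ}
    (hg : ContDiff ℝ 1 g) (hper : QPer δ g) (l : Fin 2) :
    ∫ ξ in cell δ, fderiv ℝ g ξ (Pi.single l 1) = 0 := by
  have hG : ∀ l : Fin 2, Continuous fun p : ℝ × ℝ => fderiv ℝ g ![p.1, p.2] (Pi.single l 1) :=
    fun l => ((hg.continuous_fderiv one_ne_zero).comp (by fun_prop)).clm_apply continuous_const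
  rw [setIntegral_cell_eq_setIntegral_prod, Measure.volume_eq_prod]
  revert l
  rw [Fin.forall_fin_two]
  constructor
  · have hslice : ∀ y, ∫ x in Icc (0 : ℝ) 1, fderiv ℝ g ![x, y] (Pi.single 0 1) = 0 := by
      intro y
      convert integral_fderiv_line_eq_zero hg ![0, y] (Pi.single 0 1) zero_le_one
        (by simpa using hper.1 ![0, y]) using 4 with x
      congr 1; ext i; fin_cases i <;> simp
    rw [← setIntegral_prod_swap]
    simp only [Prod.fst_swap, Prod.snd_swap]
    rw [setIntegral_prod (fun z : ℝ × ℝ => fderiv ℝ g ![z.2, z.1] (Pi.single 0 1))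
      (((hG 0).comp continuous_swap).continuousOn.integrableOn_compact
        (isCompact_Icc.prod isCompact_Icc))]
    simp [hslice]
  · have hslice : ∀ x, ∫ y in Icc (0 : ℝ) δ, fderiv ℝ g ![x, y] (Pi.single 1 1) = 0 := by
      intro x
      convert integral_fderiv_line_eq_zero hg ![x, 0] (Pi.single 1 1) hδ
        (by rw [← hper.2 ![x, 0]]; congr 1; ext i; fin_cases i <;> simp) using 4 with y
      congr 1; ext i; fin_cases i <;> simp
    rw [setIntegral_prod _ ((hG 1).continuousOn.integrableOn_compact
      (isCompact_Icc.prod isCompact_Icc))]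
    simp [hslice]

end Cell

/-- The microscopic strain `N_{r i q, j} + δ_{ir} δ_{jq}` produced by the unit macroscopic
strain `e_i ⊗ e_q`, so that `Chom p q₁ i q₂ = ⟨Cᵐ : unitStrain i q₂ : unitStrain p q₁⟩`. -/
def unitStrain (N : Fin 2 → Fin 2 → Fin 2 → (Fin 2 → ℝ) → ℝ) (i q : Fin 2) (ξ : Fin 2 → ℝ) :
    Fin 2 → Fin 2 → ℝ :=
  fun r j => pdN N r i q ξ j + kron i r * kron j q

section UnitStrain

variable {N : Fin 2 → Fin 2 → Fin 2 → (Fin 2 → ℝ) → ℝ}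

theorem continuous_pdN (hN : ∀ k p q, ContDiff ℝ 1 (N k p q)) (k p q l : Fin 2) :
    Continuous fun ξ => pdN N k p q ξ l :=
  ((hN k p q).continuous_fderiv one_ne_zero).clm_apply continuous_const

theorem continuous_unitStrain (hN : ∀ k p q, ContDiff ℝ 1 (N k p q)) (i q r j : Fin 2) :
    Continuous fun ξ => unitStrain N i q ξ r j :=
  (continuous_pdN hN r i q j).add continuous_const

theorem integral_unitStrain (hN : ∀ k p q, ContDiff ℝ 1 (N k p q)) {δ : ℝ} (hδ : 0 < δ)
    (hNper : ∀ k p q, QPer δ (N k p q)) (i q r j : Fin 2) :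
    ∫ ξ, unitStrain N i q ξ r j ∂volume[|cell δ] = kron i r * kron j q := by
  have := isProbabilityMeasure_cond_cell hδ
  simp only [unitStrain]
  rw [integral_add ((continuous_pdN hN r i q j).integrable_cond_of_isCompact (isCompact_cell δ))
    (integrable_const _), integral_cond_cell hδ.le]
  simp [pdN, integral_cell_fderiv_eq_zero hδ.le (hN r i q) (hNper r i q)]

end UnitStrain

theorem homogenized_tensor_elliptic_general (δ : ℝ) (hδ : 0 < δ) (c : ℝ) (hc : 0 < c)
    (Cm : (Fin 2 → ℝ) → Fin 2 → Fin 2 → Fin 2 → Fin 2 → ℝ)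
    (hCint : ∀ i j k l, IntegrableOn (fun ξ => Cm ξ i j k l) (cell δ))
    (hCell : ∀ (ξ : Fin 2 → ℝ) (E : Fin 2 → Fin 2 → ℝ),
      c * (∑ i, ∑ j, E i j * E i j) ≤ contr (Cm ξ) E E)
    (N : Fin 2 → Fin 2 → Fin 2 → (Fin 2 → ℝ) → ℝ)
    (hN : ∀ k p q, ContDiff ℝ 1 (N k p q))
    (hNper : ∀ k p q, QPer δ (N k p q))
    (Chom : Fin 2 → Fin 2 → Fin 2 → Fin 2 → ℝ)
    (hChom : ∀ p q1 i q2, Chom p q1 i q2 =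
      (1 / δ) * ∫ ξ in cell δ, ∑ r, ∑ j, ∑ k, ∑ l,
        Cm ξ r j k l * (pdN N r i q2 ξ j + kron i r * kron j q2) *
          (pdN N k p q1 ξ l + kron p k * kron l q1)) :
    ∀ H : Fin 2 → Fin 2 → ℝ,
      c * (∑ i, ∑ j, H i j * H i j) ≤
        ∑ p, ∑ q1, ∑ i, ∑ q2, Chom p q1 i q2 * H p q1 * H i q2 := by
  intro H
  have := isProbabilityMeasure_cond_cell hδ
  have hU := continuous_unitStrain hN
  set A : (Fin 2 → ℝ) → Fin 2 → Fin 2 → ℝ :=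
    fun ξ r j => ∑ i, ∑ q, H i q * unitStrain N i q ξ r j
  have hA : ∀ r j, Continuous fun ξ => A ξ r j := fun r j => by fun_prop
  have hmean : ∀ r j, ∫ ξ, A ξ r j ∂volume[|cell δ] = H r j := by
    intro r j
    rw [integral_sum_sum fun i q =>
      ((hU i q r j).integrable_cond_of_isCompact (isCompact_cell δ)).const_mul (H i q)]
    simp [integral_const_mul, integral_unitStrain hN hδ hNper, kron]
  have hChom_avg : ∀ p q₁ i q₂, Chom p q₁ i q₂ =
      ∫ ξ, contr (Cm ξ) (unitStrain N i q₂ ξ) (unitStrain N p q₁ ξ) ∂volume[|cell δ] := by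
    intro p q₁ i q₂
    rw [hChom, integral_cond_cell hδ.le]
    rfl
  calc c * ∑ i, ∑ j, H i j * H i j
      = c * ∑ i, ∑ j, (∫ ξ, A ξ i j ∂volume[|cell δ]) ^ 2 := by simp only [hmean, sq]
    _ ≤ ∫ ξ, contr (Cm ξ) (A ξ) (A ξ) ∂volume[|cell δ] :=
      mul_sum_sq_integral_le_integral_contr hc.le hCell
        (fun r j => (hA r j).memLp_two_cond_of_isCompact (isCompact_cell δ))
        (IntegrableOn.integrable_cond (integrableOn_contr (isCompact_cell δ) hCint hA hA))
    _ = ∑ p, ∑ q₁, ∑ i, ∑ q₂, Chom p q₁ i q₂ * H p q₁ * H i q₂ := by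
      simp only [hChom_avg]
      exact (sum_integral_contr_mul_eq_integral_contr (fun i q p q' => IntegrableOn.integrable_cond
        (integrableOn_contr (isCompact_cell δ) hCint (hU i q) (hU p q'))) H).symm

/-- The homogenized tensor inherits the ellipticity constant: if `Cᵐ` is measurable,
integrable on `Q`, `Q`-periodic and uniformly elliptic with constant `c > 0`, then for
every constant matrix `H`, `C_{pq₁iq₂} H_{pq₁} H_{iq₂} ≥ c |H|²`. -/
theorem homogenized_tensor_elliptic (δ : ℝ) (hδ : 0 < δ) (c : ℝ) (hc : 0 < c)
    (Cm : (Fin 2 → ℝ) → Fin 2 → Fin 2 → Fin 2 → Fin 2 → ℝ)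
    (hCmeas : ∀ i j k l, Measurable fun ξ => Cm ξ i j k l)
    (hCint : ∀ i j k l, IntegrableOn (fun ξ => Cm ξ i j k l) (cell δ))
    (hCper : QPer δ Cm)
    (hCell : ∀ (ξ : Fin 2 → ℝ) (E : Fin 2 → Fin 2 → ℝ),
      c * (∑ i, ∑ j, E i j * E i j) ≤ contr (Cm ξ) E E)
    (N : Fin 2 → Fin 2 → Fin 2 → (Fin 2 → ℝ) → ℝ)
    (hN : ∀ k p q, ContDiff ℝ 1 (N k p q))
    (hNper : ∀ k p q, QPer δ (N k p q))
    (Chom : Fin 2 → Fin 2 → Fin 2 → Fin 2 → ℝ)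
    (hChom : ∀ p q1 i q2, Chom p q1 i q2 =
      (1 / δ) * ∫ ξ in cell δ, ∑ r, ∑ j, ∑ k, ∑ l,
        Cm ξ r j k l * (pdN N r i q2 ξ j + kron i r * kron j q2) *
          (pdN N k p q1 ξ l + kron p k * kron l q1)) :
    ∀ H : Fin 2 → Fin 2 → ℝ,
      c * (∑ i, ∑ j, H i j * H i j) ≤
        ∑ p, ∑ q1, ∑ i, ∑ q2, Chom p q1 i q2 * H p q1 * H i q2 :=
  homogenized_tensor_elliptic_general δ hδ c hc Cm hCint hCell N hN hNper Chom hChom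
end
end

section
/- Let δ > 0 and Q = [0,1]×[0,δ]. Let χ : ℝ² → {0,1} be a measurable Q-periodic indicator function of the inclusion phase, let C_mat and C_inc be constant fourth-order tensors on ℝ², each symmetric (C_{ijkl} = C_{klij}) and positive semidefinite, let 𝒦 > 0, and define the degradation function g(𝔡) = (1−𝔡)² + 𝒦 and the damaged microscopic tensor field Cᵐ(ξ, 𝔡) = (1−χ(ξ)) g(𝔡) C_mat + χ(ξ) C_inc (damage degrades only the matrix, the inclusion stays undamaged). Fix a constant 2×2 matrix H and suppose that for each 𝔡 ∈ [0,1] there is a continuously differentiable Q-periodic corrector w(·, 𝔡) : ℝ² → ℝ² solving the weak cell problem ∫_Q Cᵐ_{ijkl}(ξ, 𝔡) (H_{kl} + ∂w_k/∂ξ_l)(∂φ_i/∂ξ_j) dξ = 0 for all continuously differentiable Q-periodic φ. Then the homogenized energy is monotonically nonincreasing in the phase field: for all 0 ≤ 𝔡₁ ≤ 𝔡₂ ≤ 1, ∫_Q Cᵐ_{ijkl}(ξ, 𝔡₂)(H_{ij} + ∂w_i/∂ξ_j(ξ,𝔡₂))(H_{kl} + ∂w_k/∂ξ_l(ξ,𝔡₂))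 dξ ≤ ∫_Q Cᵐ_{ijkl}(ξ, 𝔡₁)(H_{ij} + ∂w_i/∂ξ_j(ξ,𝔡₁))(H_{kl} + ∂w_k/∂ξ_l(ξ,𝔡₁)) dξ. -/
/-!
The weak cell problem makes the corrector `w(·, 𝔡₂)` orthogonal, in the energy form of
`Cᵐ(·, 𝔡₂)`, to every periodic perturbation, in particular to `w(·, 𝔡₁) - w(·, 𝔡₂)`. Expanding
the positive semidefinite quadratic form then shows that `w(·, 𝔡₂)` minimizes the `𝔡₂`-energy,
so its energy is at most the `𝔡₂`-energy of `w(·, 𝔡₁)`. That in turn is pointwise at most the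
`𝔡₁`-energy of `w(·, 𝔡₁)`, because `g` is decreasing on `[0, 1]` and only scales the positive
semidefinite matrix tensor.
-/

open MeasureTheory

noncomputable section

/-- Displacement gradient `(∇v)_{kl}(ξ) = ∂v_k/∂ξ_l (ξ)`. -/
def sgrad (v : (Fin 2 → ℝ) → (Fin 2 → ℝ)) (ξ : Fin 2 → ℝ) : Fin 2 → Fin 2 → ℝ :=
  fun k l => fderiv ℝ (fun ζ => v ζ k) ξ (Pi.single l 1)

section Contraction

variable {C C₁ C₂ : Fin 2 → Fin 2 → Fin 2 → Fin 2 → ℝ}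

theorem contr_comm (hC : ∀ i j k l, C i j k l = C k l i j) (A B : Fin 2 → Fin 2 → ℝ) :
    contr C A B = contr C B A := by
  have h : ∀ i j k l, C i j k l * A i j * B k l = C k l i j * B k l * A i j :=
    fun i j k l => by rw [hC]; ring
  simp only [contr, h, Fin.sum_univ_two]
  ring

theorem contr_add_self (hC : ∀ i j k l, C i j k l = C k l i j) (A B : Fin 2 → Fin 2 → ℝ) :
    contr C (A + B) (A + B) = contr C A A + 2 * contr C B A + contr C B B := by
  have h := contr_comm hC A B
  simp only [contr, Pi.add_apply, Fin.sum_univ_two] at h ⊢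
  linear_combination h

theorem contr_eq_of_forall_eq_add {a b : ℝ}
    (hC : ∀ i j k l, C i j k l = a * C₁ i j k l + b * C₂ i j k l) (A B : Fin 2 → Fin 2 → ℝ) :
    contr C A B = a * contr C₁ A B + b * contr C₂ A B := by
  simp only [contr, hC, Fin.sum_univ_two]
  ring

theorem Continuous.contr {X : Type*} [TopologicalSpace X] {A B : X → Fin 2 → Fin 2 → ℝ}
    (hA : Continuous A) (hB : Continuous B) (C : Fin 2 → Fin 2 → Fin 2 → Fin 2 → ℝ) :
    Continuous fun x => contr C (A x) (B x) := by
  unfold _root_.contr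
  fun_prop

end Contraction

theorem QPer.sub {α : Type*} [Sub α] {δ : ℝ} {u v : (Fin 2 → ℝ) → α} (hu : QPer δ u)
    (hv : QPer δ v) : QPer δ (u - v) :=
  ⟨fun ξ => by simp only [Pi.sub_apply, hu.1, hv.1],
    fun ξ => by simp only [Pi.sub_apply, hu.2, hv.2]⟩

theorem sgrad_sub {u v : (Fin 2 → ℝ) → (Fin 2 → ℝ)} (hu : Differentiable ℝ u)
    (hv : Differentiable ℝ v) : sgrad (u - v) = sgrad u - sgrad v := by
  ext ξ k l
  simp only [sgrad, Pi.sub_apply]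
  rw [fderiv_fun_sub ((differentiable_pi.1 hu k) ξ) ((differentiable_pi.1 hv k) ξ)]
  rfl

theorem ContDiff.continuous_sgrad {v : (Fin 2 → ℝ) → (Fin 2 → ℝ)} (hv : ContDiff ℝ 1 v) :
    Continuous (sgrad v) :=
  continuous_pi fun k => continuous_pi fun _ =>
    ((contDiff_pi.1 hv k).continuous_fderiv one_ne_zero).clm_apply continuous_const

section DamagedTensor

variable {C C' Cmat Cinc : Fin 2 → Fin 2 → Fin 2 → Fin 2 → ℝ} {a γ γ' : ℝ}

theorem contr_self_nonneg_of_damaged (ha₀ : 0 ≤ a) (ha₁ : a ≤ 1) (hγ : 0 ≤ γ)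
    (hCmat : ∀ E, 0 ≤ contr Cmat E E) (hCinc : ∀ E, 0 ≤ contr Cinc E E)
    (hC : ∀ i j k l, C i j k l = (1 - a) * γ * Cmat i j k l + a * Cinc i j k l)
    (E : Fin 2 → Fin 2 → ℝ) : 0 ≤ contr C E E := by
  rw [contr_eq_of_forall_eq_add hC]
  have := hCmat E
  have := hCinc E
  have : 0 ≤ 1 - a := by linarith
  positivity

theorem contr_self_le_of_damaged (ha : a ≤ 1) (hγ : γ ≤ γ') (hCmat : ∀ E, 0 ≤ contr Cmat E E)
    (hC : ∀ i j k l, C i j k l = (1 - a) * γ * Cmat i j k l + a * Cinc i j k l)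
    (hC' : ∀ i j k l, C' i j k l = (1 - a) * γ' * Cmat i j k l + a * Cinc i j k l)
    (E : Fin 2 → Fin 2 → ℝ) : contr C E E ≤ contr C' E E := by
  rw [contr_eq_of_forall_eq_add hC, contr_eq_of_forall_eq_add hC']
  have := mul_nonneg (mul_nonneg (sub_nonneg.2 ha) (sub_nonneg.2 hγ)) (hCmat E)
  linear_combination this

theorem integrableOn_contr_of_damaged {X : Type*} [TopologicalSpace X] [T2Space X] [MeasurableSpace X]
    [OpensMeasurableSpace X] {μ : Measure X} [IsFiniteMeasureOnCompacts μ] {s : Set X}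
    (hs : IsCompact s) {C : X → Fin 2 → Fin 2 → Fin 2 → Fin 2 → ℝ} {χ : X → ℝ}
    (hχ : Measurable χ) (hχ_mem : ∀ x, 0 ≤ χ x ∧ χ x ≤ 1)
    (hC : ∀ x i j k l, C x i j k l = (1 - χ x) * γ * Cmat i j k l + χ x * Cinc i j k l)
    {A B : X → Fin 2 → Fin 2 → ℝ} (hA : Continuous A) (hB : Continuous B) :
    IntegrableOn (fun x => contr (C x) (A x) (B x)) s μ := by
  have hmat : ∀ x, ‖(1 - χ x) * γ‖ ≤ |γ| := fun x => by
    rw [Real.norm_eq_abs, abs_mul]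
    exact mul_le_of_le_one_left (abs_nonneg γ)
      (abs_le.2 ⟨by linarith [hχ_mem x], by linarith [hχ_mem x]⟩)
  have hinc : ∀ x, ‖χ x‖ ≤ 1 := fun x =>
    abs_le.2 ⟨by linarith [hχ_mem x], (hχ_mem x).2⟩
  simp_rw [contr_eq_of_forall_eq_add (hC _)]
  exact ((hA.contr hB Cmat).continuousOn.integrableOn_compact hs).bdd_mul
      ((measurable_const.sub hχ).mul_const γ).aestronglyMeasurable (ae_of_all _ hmat) |>.add <|
    ((hA.contr hB Cinc).continuousOn.integrableOn_compact hs).bdd_mul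
      hχ.aestronglyMeasurable (ae_of_all _ hinc)

end DamagedTensor

theorem integral_contr_self_le_of_orthogonal {X : Type*} [MeasurableSpace X] {μ : Measure X}
    {C : X → Fin 2 → Fin 2 → Fin 2 → Fin 2 → ℝ} (hC_symm : ∀ x i j k l, C x i j k l = C x k l i j)
    (hC_psd : ∀ x E, 0 ≤ contr (C x) E E) {E F : X → Fin 2 → Fin 2 → ℝ}
    (hEE : Integrable (fun x => contr (C x) (E x) (E x)) μ)
    (hDE : Integrable (fun x => contr (C x) (F x - E x) (E x)) μ)
    (hDD : Integrable (fun x => contr (C x) (F x - E x) (F x - E x)) μ)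
    (horth : ∫ x, contr (C x) (F x - E x) (E x) ∂μ = 0) :
    ∫ x, contr (C x) (E x) (E x) ∂μ ≤ ∫ x, contr (C x) (F x) (F x) ∂μ := by
  have hexpand : ∀ x, contr (C x) (F x) (F x) = contr (C x) (E x) (E x) +
      (2 * contr (C x) (F x - E x) (E x) + contr (C x) (F x - E x) (F x - E x)) := fun x => by
    have h := contr_add_self (hC_symm x) (E x) (F x - E x)
    rw [add_sub_cancel] at h
    rw [h, add_assoc]
  have hrest : Integrable (fun x =>
      2 * contr (C x) (F x - E x) (E x) + contr (C x) (F x - E x) (F x - E x)) μ :=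
    (hDE.const_mul 2).add hDD
  rw [integral_congr_ae (ae_of_all _ hexpand), integral_add hEE hrest,
    integral_add (hDE.const_mul 2) hDD, integral_const_mul, horth, mul_zero, zero_add]
  exact le_add_of_nonneg_right (integral_nonneg fun x => hC_psd x _)

theorem homogenized_energy_nonincreasing_in_damage_general (δ : ℝ)
    (χ : (Fin 2 → ℝ) → ℝ) (hχmeas : Measurable χ)
    (hχ01 : ∀ ξ, χ ξ = 0 ∨ χ ξ = 1)
    (Cmat Cinc : Fin 2 → Fin 2 → Fin 2 → Fin 2 → ℝ)
    (hCmatsym : ∀ i j k l, Cmat i j k l = Cmat k l i j)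
    (hCincsym : ∀ i j k l, Cinc i j k l = Cinc k l i j)
    (hCmatpsd : ∀ E : Fin 2 → Fin 2 → ℝ, 0 ≤ contr Cmat E E)
    (hCincpsd : ∀ E : Fin 2 → Fin 2 → ℝ, 0 ≤ contr Cinc E E)
    (K : ℝ) (hK : 0 < K)
    (g : ℝ → ℝ) (hg : ∀ d, g d = (1 - d) ^ 2 + K)
    (Cm : (Fin 2 → ℝ) → ℝ → Fin 2 → Fin 2 → Fin 2 → Fin 2 → ℝ)
    (hCm : ∀ ξ d i j k l,
      Cm ξ d i j k l = (1 - χ ξ) * g d * Cmat i j k l + χ ξ * Cinc i j k l)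
    (H : Fin 2 → Fin 2 → ℝ)
    (w : (Fin 2 → ℝ) → ℝ → (Fin 2 → ℝ))
    (hw : ∀ d ∈ Set.Icc (0 : ℝ) 1,
      ContDiff ℝ 1 (fun ξ => w ξ d) ∧ QPer δ (fun ξ => w ξ d) ∧
      ∀ φ : (Fin 2 → ℝ) → (Fin 2 → ℝ), ContDiff ℝ 1 φ → QPer δ φ →
        (∫ ξ in cell δ, contr (Cm ξ d) (sgrad φ ξ)
          (fun k l => H k l + sgrad (fun ζ => w ζ d) ξ k l)) = 0) :
    ∀ d1 d2 : ℝ, 0 ≤ d1 → d1 ≤ d2 → d2 ≤ 1 →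
      (∫ ξ in cell δ, contr (Cm ξ d2)
          (fun i j => H i j + sgrad (fun ζ => w ζ d2) ξ i j)
          (fun k l => H k l + sgrad (fun ζ => w ζ d2) ξ k l)) ≤
        ∫ ξ in cell δ, contr (Cm ξ d1)
          (fun i j => H i j + sgrad (fun ζ => w ζ d1) ξ i j)
          (fun k l => H k l + sgrad (fun ζ => w ζ d1) ξ k l) := by
  intro d1 d2 hd1 hd12 hd2
  obtain ⟨hw₁, hw₁per, -⟩ := hw d1 ⟨hd1, hd12.trans hd2⟩
  obtain ⟨hw₂, hw₂per, hcell₂⟩ := hw d2 ⟨hd1.trans hd12, hd2⟩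
  have hχ : ∀ ξ, 0 ≤ χ ξ ∧ χ ξ ≤ 1 := fun ξ => by rcases hχ01 ξ with h | h <;> simp [h]
  have hg_nonneg : 0 ≤ g d2 := by rw [hg]; positivity
  have hg_anti : g d2 ≤ g d1 := by rw [hg, hg]; nlinarith
  have hint : ∀ d {A B : (Fin 2 → ℝ) → Fin 2 → Fin 2 → ℝ}, Continuous A → Continuous B →
      IntegrableOn (fun ξ => contr (Cm ξ d) (A ξ) (B ξ)) (cell δ) := fun d _ _ =>
    integrableOn_contr_of_damaged isCompact_Icc hχmeas hχ (hCm · d)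
  set E₁ : (Fin 2 → ℝ) → Fin 2 → Fin 2 → ℝ := fun ξ => H + sgrad (fun ζ => w ζ d1) ξ
  set E₂ : (Fin 2 → ℝ) → Fin 2 → Fin 2 → ℝ := fun ξ => H + sgrad (fun ζ => w ζ d2) ξ
  have hE₁ : Continuous E₁ := continuous_const.add hw₁.continuous_sgrad
  have hE₂ : Continuous E₂ := continuous_const.add hw₂.continuous_sgrad
  have horth : ∫ ξ in cell δ, contr (Cm ξ d2) (E₁ ξ - E₂ ξ) (E₂ ξ) = 0 := by
    have := hcell₂ ((fun ξ => w ξ d1) - fun ξ => w ξ d2) (hw₁.sub hw₂) (hw₁per.sub hw₂per)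
    rw [sgrad_sub (hw₁.differentiable one_ne_zero) (hw₂.differentiable one_ne_zero)] at this
    convert this using 4 with ξ
    · simp only [E₁, E₂, Pi.sub_apply, add_sub_add_left_eq_sub]
    · rfl
  calc ∫ ξ in cell δ, contr (Cm ξ d2) (E₂ ξ) (E₂ ξ)
      ≤ ∫ ξ in cell δ, contr (Cm ξ d2) (E₁ ξ) (E₁ ξ) :=
        integral_contr_self_le_of_orthogonal
          (fun ξ i j k l => by rw [hCm, hCm, hCmatsym, hCincsym])
          (fun ξ => contr_self_nonneg_of_damaged (hχ ξ).1 (hχ ξ).2 hg_nonneg hCmatpsd hCincpsd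
            (hCm ξ d2))
          (hint d2 hE₂ hE₂) (hint d2 (hE₁.sub hE₂) hE₂) (hint d2 (hE₁.sub hE₂) (hE₁.sub hE₂))
          horth
    _ ≤ ∫ ξ in cell δ, contr (Cm ξ d1) (E₁ ξ) (E₁ ξ) :=
        setIntegral_mono (hint d2 hE₁ hE₁) (hint d1 hE₁ hE₁) fun ξ =>
          contr_self_le_of_damaged (hχ ξ).2 hg_anti hCmatpsd (hCm ξ d2) (hCm ξ d1) _

/-- Monotonicity of the homogenized energy in the phase field: only the matrix is
degraded by `g(𝔡) = (1-𝔡)² + 𝒦`, the inclusion (indicator `χ`) stays undamaged, so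
the homogenized energy of the corrector is nonincreasing in `𝔡 ∈ [0,1]`. -/
theorem homogenized_energy_nonincreasing_in_damage (δ : ℝ) (hδ : 0 < δ)
    (χ : (Fin 2 → ℝ) → ℝ) (hχmeas : Measurable χ)
    (hχ01 : ∀ ξ, χ ξ = 0 ∨ χ ξ = 1) (hχper : QPer δ χ)
    (Cmat Cinc : Fin 2 → Fin 2 → Fin 2 → Fin 2 → ℝ)
    (hCmatsym : ∀ i j k l, Cmat i j k l = Cmat k l i j)
    (hCincsym : ∀ i j k l, Cinc i j k l = Cinc k l i j)
    (hCmatpsd : ∀ E : Fin 2 → Fin 2 → ℝ, 0 ≤ contr Cmat E E)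
    (hCincpsd : ∀ E : Fin 2 → Fin 2 → ℝ, 0 ≤ contr Cinc E E)
    (K : ℝ) (hK : 0 < K)
    (g : ℝ → ℝ) (hg : ∀ d, g d = (1 - d) ^ 2 + K)
    (Cm : (Fin 2 → ℝ) → ℝ → Fin 2 → Fin 2 → Fin 2 → Fin 2 → ℝ)
    (hCm : ∀ ξ d i j k l,
      Cm ξ d i j k l = (1 - χ ξ) * g d * Cmat i j k l + χ ξ * Cinc i j k l)
    (H : Fin 2 → Fin 2 → ℝ)
    (w : (Fin 2 → ℝ) → ℝ → (Fin 2 → ℝ))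
    (hw : ∀ d ∈ Set.Icc (0 : ℝ) 1,
      ContDiff ℝ 1 (fun ξ => w ξ d) ∧ QPer δ (fun ξ => w ξ d) ∧
      ∀ φ : (Fin 2 → ℝ) → (Fin 2 → ℝ), ContDiff ℝ 1 φ → QPer δ φ →
        (∫ ξ in cell δ, contr (Cm ξ d) (sgrad φ ξ)
          (fun k l => H k l + sgrad (fun ζ => w ζ d) ξ k l)) = 0) :
    ∀ d1 d2 : ℝ, 0 ≤ d1 → d1 ≤ d2 → d2 ≤ 1 →
      (∫ ξ in cell δ, contr (Cm ξ d2)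
          (fun i j => H i j + sgrad (fun ζ => w ζ d2) ξ i j)
          (fun k l => H k l + sgrad (fun ζ => w ζ d2) ξ k l)) ≤
        ∫ ξ in cell δ, contr (Cm ξ d1)
          (fun i j => H i j + sgrad (fun ζ => w ζ d1) ξ i j)
          (fun k l => H k l + sgrad (fun ζ => w ζ d1) ξ k l) :=
  homogenized_energy_nonincreasing_in_damage_general δ χ hχmeas hχ01 Cmat Cinc hCmatsym hCincsym
    hCmatpsd hCincpsd K hK g hg Cm hCm H w hw
end
end
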